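/- Let x be a 2×2 matrix of nonnegative reals and z > 0. For every l ≥ 2, the size-l orbit generating function satisfies A_l(x,z) ≤ A_2(x,z)^{l/2}, where A_l(x,z) = Σ_{g,h ∈ {0,1}^O} z^{δ_π(g,h)} x^{μ(g,h)} over a size-l orbit O of the induced vertex-pair permutation (the same bound holds for user-attribute orbits with the matrix y in place of x and weight w₂ in place of w₁). -/

import Mathlib

open Finset Function

noncomputable section

/-- The set of user-user vertex pairs: unordered pairs of distinct user vertices. -/
abbrev UU (n : ℕ) : Type := {e : Sym2 (Fin n) // ¬ e.IsDiag}

/-- The set of user-attribute vertex pairs. -/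
abbrev UA (n m : ℕ) : Type := Fin n × Fin m

/-- All vertex pairs that can carry an edge. -/
abbrev Edge (n m : ℕ) : Type := UU n ⊕ UA n m

theorem mapNotDiag {n : ℕ} (π : Equiv.Perm (Fin n)) (e : UU n) :
    ¬ (Sym2.map π e.1).IsDiag := by
  obtain ⟨s, hs⟩ := e
  induction s using Sym2.ind with
  | _ a b =>
    simp only [Sym2.map_pair_eq, Sym2.mk_isDiag_iff] at *
    exact fun h => hs (π.injective h)

/-- The action of a user permutation on vertex pairs. -/
def permEdge {n m : ℕ} (π : Equiv.Perm (Fin n)) : Edge n m → Edge n m :=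
  Sum.map (fun e => (⟨Sym2.map π e.1, mapNotDiag π e⟩ : UU n)) (fun iv => (π iv.1, iv.2))

/-- The permutation `π^E` induced on vertex pairs by a user permutation `π`. -/
def permEdgeE {n m : ℕ} (π : Equiv.Perm (Fin n)) : Equiv.Perm (Edge n m) :=
  Equiv.ofBijective (permEdge π)
    (Finite.injective_iff_bijective.mp
      (Injective.sumMap
        (fun a b hab =>
          Subtype.ext (Sym2.map.injective π.injective (congrArg Subtype.val hab)))
        (fun a b hab => by
          cases a; cases b
          simpa [Prod.ext_iff, π.injective.eq_iff] using hab)))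

variable {n m : ℕ}

/-- The orbit of a vertex pair under the induced permutation, as a finite set. -/
def orbitOf (σ : Equiv.Perm (Edge n m)) (e : Edge n m) : Finset (Edge n m) :=
  univ.filter fun e' => σ.SameCycle e e'

/-- The set of orbits of the induced permutation. -/
def orbitsOf (σ : Equiv.Perm (Edge n m)) : Finset (Finset (Edge n m)) :=
  univ.image (orbitOf σ)

/-- Number of user-user orbits of size `l`. -/
def tU (σ : Equiv.Perm (Edge n m)) (l : ℕ) : ℕ :=
  ((orbitsOf σ).filter fun O => O.card = l ∧ ∀ e ∈ O, e.isLeft).card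

/-- Number of user-attribute orbits of size `l`. -/
def tA (σ : Equiv.Perm (Edge n m)) (l : ℕ) : ℕ :=
  ((orbitsOf σ).filter fun O => O.card = l ∧ ∀ e ∈ O, e.isRight).card

/-- Boolean functions on vertex pairs supported on `S` (vanishing off `S`). -/
def suppFuns (S : Finset (Edge n m)) : Finset (Edge n m → Bool) :=
  univ.filter fun g => ∀ e ∉ S, g e = false

/-- The quantity `δ_π` restricted to a set `S` of vertex pairs. -/
def deltaS (w1 w2 : ℝ) (π : Equiv.Perm (Fin n)) (S : Finset (Edge n m))
    (g h : Edge n m → Bool) : ℝ :=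
  w1 * ∑ e ∈ S.filter (fun e => e.isLeft),
      ((if g e ≠ h (permEdge π e) then (1 : ℝ) else 0) - if g e ≠ h e then 1 else 0)
  + w2 * ∑ e ∈ S.filter (fun e => e.isRight),
      ((if g e ≠ h (permEdge π e) then (1 : ℝ) else 0) - if g e ≠ h e then 1 else 0)

/-- The count `μ_{ij}` over the user-user pairs of `S`. -/
def muS (S : Finset (Edge n m)) (g h : Edge n m → Bool) (i j : Bool) : ℕ :=
  (S.filter fun e => e.isLeft ∧ g e = i ∧ h e = j).card

/-- The count `ν_{ij}` over the user-attribute pairs of `S`. -/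
def nuS (S : Finset (Edge n m)) (g h : Edge n m → Bool) (i j : Bool) : ℕ :=
  (S.filter fun e => e.isRight ∧ g e = i ∧ h e = j).card

/-- The monomial `x^{μ(g,h)}`. -/
def monU (x : Bool → Bool → ℝ) (S : Finset (Edge n m)) (g h : Edge n m → Bool) : ℝ :=
  ∏ i : Bool, ∏ j : Bool, x i j ^ muS S g h i j

/-- The monomial `y^{ν(g,h)}`. -/
def monA (y : Bool → Bool → ℝ) (S : Finset (Edge n m)) (g h : Edge n m → Bool) : ℝ :=
  ∏ i : Bool, ∏ j : Bool, y i j ^ nuS S g h i j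

/-- The generating function `A_S(x,y,z) = Σ_{g,h} z^{δ_π(g,h)} x^{μ(g,h)} y^{ν(g,h)}`
of the set `S` of vertex pairs (for `S = E` this is `A(x,y,z)`). -/
def genF (w1 w2 : ℝ) (π : Equiv.Perm (Fin n)) (x y : Bool → Bool → ℝ) (z : ℝ)
    (S : Finset (Edge n m)) : ℝ :=
  ∑ g ∈ suppFuns S, ∑ h ∈ suppFuns S,
    z ^ deltaS w1 w2 π S g h * monU x S g h * monA y S g h


/-- The closed form of the generating function of a size-2 orbit:
`A₂(x,z) = (Σ_{ij} x_{ij})² + 2x₀₀x₁₁(z^{2w} − 1) + 2x₁₀x₀₁(z^{−2w} − 1)`. -/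
def A2closed (x : Bool → Bool → ℝ) (w z : ℝ) : ℝ :=
  (x false false + x true false + x false true + x true true) ^ 2
    + 2 * x false false * x true true * (z ^ (2 * w) - 1)
    + 2 * x true false * x false true * (z ^ (-(2 * w)) - 1)

/-!
Summing out `g` edge by edge, the generating function of an orbit `e, π^E e, …` of length `l`
becomes `Σ_h Π_i C (h i) (h (i + 1)) = tr (C ^ l)` for a `2 × 2` transfer matrix `C` with
nonnegative entries and `tr (C ^ 2) = A₂`. Such a matrix has real eigenvalues `r ≥ |s|`, so
`tr (C ^ l) = r ^ l + s ^ l ≤ (r ^ 2 + s ^ 2) ^ (l / 2) = A₂ ^ (l / 2)`.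
-/

theorem Real.pow_add_pow_le_rpow_sq_add_sq {r : ℝ} (hr : 0 ≤ r) (s : ℝ) {l : ℕ} (hl : 2 ≤ l) :
    r ^ l + s ^ l ≤ (r ^ 2 + s ^ 2) ^ ((l : ℝ) / 2) := by
  have hp : 1 ≤ (l : ℝ) / 2 := by
    rw [le_div_iff₀ two_pos, one_mul]; exact_mod_cast hl
  have sq_rpow : ∀ {a : ℝ}, 0 ≤ a → (a ^ 2) ^ ((l : ℝ) / 2) = a ^ l := fun {a} ha => by
    rw [← Real.rpow_natCast a 2, ← Real.rpow_mul ha, ← Real.rpow_natCast]; congr 1; push_cast; ring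
  have hs : s ^ l ≤ |s| ^ l := by rw [pow_abs]; exact le_abs_self _
  calc r ^ l + s ^ l ≤ r ^ l + |s| ^ l := by gcongr
    _ = (r ^ 2) ^ ((l : ℝ) / 2) + (|s| ^ 2) ^ ((l : ℝ) / 2) := by
      rw [sq_rpow hr, sq_rpow (abs_nonneg s)]
    _ ≤ (r ^ 2 + |s| ^ 2) ^ ((l : ℝ) / 2) :=
      Real.add_rpow_le_rpow_add (by positivity) (by positivity) hp
    _ = (r ^ 2 + s ^ 2) ^ ((l : ℝ) / 2) := by rw [sq_abs]

theorem Finset.prod_prod_pow_card_filter {α β M : Type*} [CommMonoid M] [Fintype β]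
    [DecidableEq β] (S : Finset α) (u v : α → β) (x : β → β → M) :
    ∏ i, ∏ j, x i j ^ #{e ∈ S | u e = i ∧ v e = j} = ∏ e ∈ S, x (u e) (v e) := by
  rw [← prod_fiberwise' S (fun e => (u e, v e)) (fun p => x p.1 p.2), Fintype.prod_prod_type]
  simp [Prod.ext_iff]

namespace Matrix

variable {ι R : Type*} [Fintype ι] [DecidableEq ι]

theorem sum_prod_path_mul_eq_trace [CommSemiring R] (C D : Matrix ι ι R) (k : ℕ) :
    ∑ v : Fin (k + 1) → ι,
        (∏ j : Fin k, C (v j.castSucc) (v j.succ)) * D (v (Fin.last k)) (v 0) =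
      trace (C ^ k * D) := by
  induction k generalizing D with
  | zero =>
    rw [← (Equiv.funUnique (Fin 1) ι).symm.sum_comp]
    simp [trace]
  | succ k ih =>
    rw [← (Fin.consEquiv fun _ => ι).sum_comp, Fintype.sum_prod_type, Finset.sum_comm,
      pow_succ', Matrix.mul_assoc, trace_mul_comm, Matrix.mul_assoc, ← ih]
    refine sum_congr rfl fun u _ => ?_
    simp only [Fin.consEquiv, Equiv.coe_fn_mk, Fin.prod_univ_succ, Fin.cons_zero, Fin.cons_succ,
      Fin.castSucc_zero, ← Fin.succ_castSucc, ← Fin.succ_last, mul_apply, Finset.mul_sum]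
    exact sum_congr rfl fun c _ => by ring

theorem sum_prod_cycle_eq_trace_pow [CommSemiring R] (C : Matrix ι ι R) (l : ℕ) [NeZero l] :
    ∑ v : Fin l → ι, ∏ i, C (v i) (v (i + 1)) = trace (C ^ l) := by
  obtain ⟨k, rfl⟩ : ∃ k, l = k + 1 := Nat.exists_eq_succ_of_ne_zero (NeZero.ne l)
  rw [pow_succ, ← sum_prod_path_mul_eq_trace]
  refine sum_congr rfl fun v _ => ?_
  rw [Fin.prod_univ_castSucc]
  simp only [Fin.coeSucc_eq_succ, Fin.last_add_one]

theorem trace_pow_eq_of_sq_eq [CommRing R] (hι : Fintype.card ι = 2) {C : Matrix ι ι R}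
    {r s : R} (htr : trace C = r + s) (hsq : C ^ 2 = (r + s) • C - (r * s) • 1) (k : ℕ) :
    trace (C ^ k) = r ^ k + s ^ k := by
  induction k using Nat.twoStepInduction with
  | zero => rw [pow_zero, trace_one, hι]; norm_num
  | one => simpa using htr
  | more k ih₀ ih₁ =>
    rw [pow_add, hsq, Matrix.mul_sub, Matrix.mul_smul, Matrix.mul_smul, ← pow_succ, trace_sub,
      trace_smul, trace_smul, mul_one, ih₀, ih₁]
    simp only [smul_eq_mul]
    ring

theorem trace_pow_le_rpow_trace_sq (C : Matrix Bool Bool ℝ) (hC : ∀ i j, 0 ≤ C i j) {l : ℕ}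
    (hl : 2 ≤ l) : trace (C ^ l) ≤ trace (C ^ 2) ^ ((l : ℝ) / 2) := by
  set t := C false false + C true true
  set d := C false false * C true true - C false true * C true false
  have hdisc : 0 ≤ t ^ 2 - 4 * d := by
    nlinarith [sq_nonneg (C false false - C true true), mul_nonneg (hC false true) (hC true false)]
  set q := √(t ^ 2 - 4 * d)
  have hq : q ^ 2 = t ^ 2 - 4 * d := Real.sq_sqrt hdisc
  have hr : 0 ≤ (t + q) / 2 := by
    have := hC false false; have := hC true true; positivity
  -- `(t ± q) / 2` are the eigenvalues of `C`
  have htr : trace C = (t + q) / 2 + (t - q) / 2 := by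
    simp only [trace, diag_apply, Fintype.sum_bool, t]; ring
  have hsq : C ^ 2 = ((t + q) / 2 + (t - q) / 2) • C - ((t + q) / 2 * ((t - q) / 2)) • 1 := by
    rw [show (t + q) / 2 + (t - q) / 2 = t by ring,
      show (t + q) / 2 * ((t - q) / 2) = d by linear_combination -hq / 4]
    ext i j
    cases i <;> cases j <;>
      simp only [sq, mul_apply, Fintype.sum_bool, sub_apply, smul_apply, smul_eq_mul, one_apply,
        Bool.true_eq_false, Bool.false_eq_true, if_true, if_false, t, d] <;> ring
  rw [trace_pow_eq_of_sq_eq rfl htr hsq, trace_pow_eq_of_sq_eq rfl htr hsq]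
  exact Real.pow_add_pow_le_rpow_sq_add_sq hr _ hl

end Matrix

namespace Equiv.Perm

variable {α : Type*}

theorem SameCycle.eq_of_invariant [Finite α] {β : Type*} {σ : Perm α} {f : α → β}
    (hf : ∀ a, f (σ a) = f a) {x y : α} (h : σ.SameCycle x y) : f y = f x := by
  obtain ⟨i, -, rfl⟩ := h.exists_pow_eq'
  clear h
  induction i with
  | zero => rfl
  | succ i ih => rw [pow_succ', mul_apply, hf, ih]

theorem exists_finEquiv_sameCycle [Fintype α] [DecidableEq α] (σ : Perm α) (x : α) :
    ∃ k, ∃ E : Fin (k + 1) ≃ {y // y ∈ univ.filter (σ.SameCycle x)},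
      ∀ i, σ (E i) = E (i + 1) := by
  have hpos := minimalPeriod_pos_of_mem_periodicPts (σ.injective.mem_periodicPts x)
  obtain ⟨k, hk⟩ : ∃ k, minimalPeriod σ x = k + 1 := Nat.exists_eq_succ_of_ne_zero hpos.ne'
  have hmod : ∀ j, σ^[j % (k + 1)] x = σ^[j] x := hk ▸ fun j => iterate_mod_minimalPeriod_eq
  let f : Fin (k + 1) → {y // y ∈ univ.filter (σ.SameCycle x)} := fun i =>
    ⟨σ^[i] x, by simp [iterate_eq_pow, sameCycle_pow_right, SameCycle.refl]⟩
  have hf : Bijective f := by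
    refine ⟨fun i j hij => Fin.ext ?_, fun ⟨y, hy⟩ => ?_⟩
    · exact iterate_injOn_Iio_minimalPeriod (by rw [Set.mem_Iio, hk]; exact i.2)
        (by rw [Set.mem_Iio, hk]; exact j.2) (congrArg Subtype.val hij)
    · obtain ⟨i, -, rfl⟩ := (mem_filter.mp hy).2.exists_pow_eq'
      exact ⟨⟨i % (k + 1), Nat.mod_lt _ k.succ_pos⟩,
        Subtype.ext <| by simp [f, hmod, iterate_eq_pow]⟩
  refine ⟨k, Equiv.ofBijective f hf, fun i => ?_⟩
  simp only [Equiv.ofBijective_apply, f, Fin.val_add, Fin.val_one', Nat.add_mod_mod, hmod]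
  exact (iterate_succ_apply' σ i x).symm

end Equiv.Perm

theorem isLeft_of_mem_orbitOf (π : Equiv.Perm (Fin n)) {e e' : Edge n m}
    (h : e' ∈ orbitOf (permEdgeE π) e) : e'.isLeft = e.isLeft :=
  (mem_filter.mp h).2.eq_of_invariant fun e => by cases e <;> rfl

theorem isRight_of_mem_orbitOf (π : Equiv.Perm (Fin n)) {e e' : Edge n m}
    (h : e' ∈ orbitOf (permEdgeE π) e) : e'.isRight = e.isRight :=
  (mem_filter.mp h).2.eq_of_invariant fun e => by cases e <;> rfl

/-- The factor of `z ^ δ_π(g, h)` contributed by a pair `e` with `g e = a`, `h e = b` and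
`h (π^E e) = b'`. -/
def flipWeight (w z : ℝ) (a b b' : Bool) : ℝ :=
  z ^ (w * ((if a ≠ b' then (1 : ℝ) else 0) - if a ≠ b then 1 else 0))

def transferMatrix (x : Bool → Bool → ℝ) (w z : ℝ) : Matrix Bool Bool ℝ :=
  Matrix.of fun b b' => ∑ a, flipWeight w z a b b' * x a b

theorem transferMatrix_nonneg {x : Bool → Bool → ℝ} (hx : ∀ i j, 0 ≤ x i j) (w : ℝ) {z : ℝ}
    (hz : 0 < z) (b b' : Bool) : 0 ≤ transferMatrix x w z b b' := by
  simp only [transferMatrix, flipWeight, Matrix.of_apply]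
  exact sum_nonneg fun a _ => mul_nonneg (Real.rpow_nonneg hz.le _) (hx a b)

theorem trace_transferMatrix_sq (x : Bool → Bool → ℝ) (w : ℝ) {z : ℝ} (hz : 0 < z) :
    Matrix.trace (transferMatrix x w z ^ 2) = A2closed x w z := by
  have hinv : z ^ w * z ^ (-w) = 1 := by rw [← Real.rpow_add hz, add_neg_cancel, Real.rpow_zero]
  have hsq : ∀ v : ℝ, z ^ (2 * v) = z ^ v * z ^ v := fun v => by rw [two_mul, Real.rpow_add hz]
  rw [A2closed, neg_mul_eq_mul_neg, hsq, hsq]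
  simp only [transferMatrix, flipWeight, sq, Matrix.trace, Matrix.diag_apply, Matrix.mul_apply,
    Matrix.of_apply, Fintype.sum_bool, ne_eq, not_true, not_false_eq_true, Bool.true_eq_false,
    Bool.false_eq_true, if_true, if_false, sub_self, sub_zero, zero_sub, mul_zero, mul_one, mul_neg,
    neg_zero, Real.rpow_zero, one_mul]
  linear_combination (2 * x false false * x false true + 2 * x true false * x true true) * hinv

theorem sum_suppFuns_comp_equiv {κ : Type*} [Fintype κ] [DecidableEq κ] (S : Finset (Edge n m))
    (E : κ ≃ S) (F : (κ → Bool) → ℝ) : ∑ g ∈ suppFuns S, F (fun i => g (E i)) = ∑ u, F u := by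
  refine sum_bij' (fun g _ i => g (E i))
    (fun u _ e => if he : e ∈ S then u (E.symm ⟨e, he⟩) else false) (by simp) ?_ ?_ ?_ (by simp)
  · intro u _; simp +contextual [suppFuns]
  · intro g hg; funext e
    by_cases he : e ∈ S
    · simp [he]
    · simp [he, ((mem_filter.mp hg).2 e he)]
  · intro u _; funext i; simp

theorem sum_suppFuns_comp_equiv₂ {κ : Type*} [Fintype κ] [DecidableEq κ] (S : Finset (Edge n m))
    (E : κ ≃ S) (F : (κ → Bool) → (κ → Bool) → ℝ) :
    ∑ g ∈ suppFuns S, ∑ h ∈ suppFuns S, F (fun i => g (E i)) (fun i => h (E i)) =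
      ∑ u, ∑ v, F u v := by
  rw [← sum_suppFuns_comp_equiv S E fun u => ∑ v, F u v]
  exact sum_congr rfl fun g _ => sum_suppFuns_comp_equiv S E _

theorem sum_suppFuns_prod_eq_trace_pow (S : Finset (Edge n m)) (σ : Equiv.Perm (Edge n m))
    {k : ℕ} (E : Fin (k + 1) ≃ S) (hE : ∀ i, σ (E i) = E (i + 1)) (F : Bool → Bool → Bool → ℝ) :
    ∑ g ∈ suppFuns S, ∑ h ∈ suppFuns S, ∏ e ∈ S, F (g e) (h e) (h (σ e)) =
      Matrix.trace ((Matrix.of fun b b' => ∑ a, F a b b') ^ (k + 1)) := by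
  let G (u v : Fin (k + 1) → Bool) : ℝ := ∏ i, F (u i) (v i) (v (i + 1))
  have hprod (g h : Edge n m → Bool) :
      ∏ e ∈ S, F (g e) (h e) (h (σ e)) = G (fun i => g (E i)) (fun i => h (E i)) := by
    rw [← prod_coe_sort, ← E.prod_comp]; simp [G, hE]
  calc _ = ∑ g ∈ suppFuns S, ∑ h ∈ suppFuns S, G (fun i => g (E i)) (fun i => h (E i)) :=
        sum_congr rfl fun g _ => sum_congr rfl fun h _ => hprod g h
    _ = ∑ u, ∑ v, G u v := sum_suppFuns_comp_equiv₂ S E G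
    _ = _ := by
      rw [sum_comm, ← Matrix.sum_prod_cycle_eq_trace_pow]
      simp only [G, Matrix.of_apply, Fintype.prod_sum]

theorem sum_prod_orbitOf_le (σ : Equiv.Perm (Edge n m)) (e₀ : Edge n m) {x : Bool → Bool → ℝ}
    (hx : ∀ i j, 0 ≤ x i j) (w : ℝ) {z : ℝ} (hz : 0 < z) (hl : 2 ≤ (orbitOf σ e₀).card) :
    ∑ g ∈ suppFuns (orbitOf σ e₀), ∑ h ∈ suppFuns (orbitOf σ e₀),
        ∏ e ∈ orbitOf σ e₀, flipWeight w z (g e) (h e) (h (σ e)) * x (g e) (h e) ≤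
      A2closed x w z ^ (((orbitOf σ e₀).card : ℝ) / 2) := by
  obtain ⟨k, E, hE⟩ : ∃ k, ∃ E : Fin (k + 1) ≃ orbitOf σ e₀, ∀ i, σ (E i) = E (i + 1) :=
    σ.exists_finEquiv_sameCycle e₀
  have hcard : (orbitOf σ e₀).card = k + 1 := by
    rw [← Fintype.card_coe, ← Fintype.card_congr E, Fintype.card_fin]
  refine (sum_suppFuns_prod_eq_trace_pow _ σ E hE
    fun a b b' => flipWeight w z a b b' * x a b).trans_le ?_
  rw [hcard, ← trace_transferMatrix_sq x w hz]
  exact Matrix.trace_pow_le_rpow_trace_sq _ (transferMatrix_nonneg hx w hz) (hcard ▸ hl)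

section Reduction

variable {S : Finset (Edge n m)}

theorem monU_eq_prod (x : Bool → Bool → ℝ) (g h : Edge n m → Bool) :
    monU x S g h = ∏ e ∈ S with e.isLeft, x (g e) (h e) := by
  rw [monU, ← prod_prod_pow_card_filter]
  simp [muS, filter_filter]

theorem monA_eq_prod (y : Bool → Bool → ℝ) (g h : Edge n m → Bool) :
    monA y S g h = ∏ e ∈ S with e.isRight, y (g e) (h e) := by
  rw [monA, ← prod_prod_pow_card_filter]
  simp [nuS, filter_filter]

theorem genF_eq_sum_prod (w₁ w₂ : ℝ) (π : Equiv.Perm (Fin n)) (x y : Bool → Bool → ℝ)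
    {z : ℝ} (hz : 0 < z) :
    genF w₁ w₂ π x y z S = ∑ g ∈ suppFuns S, ∑ h ∈ suppFuns S,
      (∏ e ∈ S with e.isLeft, flipWeight w₁ z (g e) (h e) (h (permEdge π e)) * x (g e) (h e)) *
        ∏ e ∈ S with e.isRight, flipWeight w₂ z (g e) (h e) (h (permEdge π e)) * y (g e) (h e) := by
  refine sum_congr rfl fun g _ => sum_congr rfl fun h _ => ?_
  rw [deltaS, monU_eq_prod, monA_eq_prod, Real.rpow_add hz, mul_sum, mul_sum,
    Real.rpow_sum_of_pos hz, Real.rpow_sum_of_pos hz, prod_mul_distrib, prod_mul_distrib]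
  simp only [flipWeight]
  ring

end Reduction

theorem genF_orbitOf_of_isLeft (w₁ w₂ : ℝ) (π : Equiv.Perm (Fin n)) (x y : Bool → Bool → ℝ)
    {z : ℝ} (hz : 0 < z) {e₀ : Edge n m} (he₀ : e₀.isLeft) :
    genF w₁ w₂ π x y z (orbitOf (permEdgeE π) e₀) =
      ∑ g ∈ suppFuns (orbitOf (permEdgeE π) e₀), ∑ h ∈ suppFuns (orbitOf (permEdgeE π) e₀),
        ∏ e ∈ orbitOf (permEdgeE π) e₀,
          flipWeight w₁ z (g e) (h e) (h (permEdge π e)) * x (g e) (h e) := by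
  have hL (e) (he : e ∈ orbitOf (permEdgeE π) e₀) : e.isLeft :=
    (isLeft_of_mem_orbitOf π he).trans he₀
  rw [genF_eq_sum_prod w₁ w₂ π x y hz, filter_true_of_mem hL,
    filter_false_of_mem fun e he => Sum.not_isRight.mpr (hL e he)]
  simp only [prod_empty, mul_one]

theorem genF_orbitOf_of_isRight (w₁ w₂ : ℝ) (π : Equiv.Perm (Fin n)) (x y : Bool → Bool → ℝ)
    {z : ℝ} (hz : 0 < z) {e₀ : Edge n m} (he₀ : e₀.isRight) :
    genF w₁ w₂ π x y z (orbitOf (permEdgeE π) e₀) =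
      ∑ g ∈ suppFuns (orbitOf (permEdgeE π) e₀), ∑ h ∈ suppFuns (orbitOf (permEdgeE π) e₀),
        ∏ e ∈ orbitOf (permEdgeE π) e₀,
          flipWeight w₂ z (g e) (h e) (h (permEdge π e)) * y (g e) (h e) := by
  have hR (e) (he : e ∈ orbitOf (permEdgeE π) e₀) : e.isRight :=
    (isRight_of_mem_orbitOf π he).trans he₀
  rw [genF_eq_sum_prod w₁ w₂ π x y hz, filter_true_of_mem hR,
    filter_false_of_mem fun e he => Sum.not_isLeft.mpr (hR e he)]
  simp only [prod_empty, one_mul]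

/-- **Fact 2.** For nonnegative `x` (and `y`) and `z > 0`, the generating function of
any orbit of size `l ≥ 2` is at most `A₂^{l/2}`, both for user-user orbits (with the
matrix `x` and weight `w₁`) and for user-attribute orbits (with `y` and `w₂`). -/
theorem genF_orbit_le_A2_pow
    (n m : ℕ) (π : Equiv.Perm (Fin n)) (w1 w2 : ℝ)
    (x y : Bool → Bool → ℝ) (hx : ∀ i j, 0 ≤ x i j) (hy : ∀ i j, 0 ≤ y i j)
    (z : ℝ) (hz : 0 < z) :
    (∀ e : Edge n m, e.isLeft →
      2 ≤ (orbitOf (permEdgeE (n := n) (m := m) π) e).card →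
      genF w1 w2 π x y z (orbitOf (permEdgeE (n := n) (m := m) π) e) ≤
        A2closed x w1 z ^
          (((orbitOf (permEdgeE (n := n) (m := m) π) e).card : ℝ) / 2)) ∧
    (∀ e : Edge n m, e.isRight →
      2 ≤ (orbitOf (permEdgeE (n := n) (m := m) π) e).card →
      genF w1 w2 π x y z (orbitOf (permEdgeE (n := n) (m := m) π) e) ≤
        A2closed y w2 z ^
          (((orbitOf (permEdgeE (n := n) (m := m) π) e).card : ℝ) / 2)) := by
  refine ⟨fun e he hl => ?_, fun e he hl => ?_⟩
  · rw [genF_orbitOf_of_isLeft w1 w2 π x y hz he]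
    exact sum_prod_orbitOf_le _ e hx w1 hz hl
  · rw [genF_orbitOf_of_isRight w1 w2 π x y hz he]
    exact sum_prod_orbitOf_le _ e hy w2 hz hl
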